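/- Let (D,F) be a tight valid pair with F = (f₁,…,f_s) such that D is not biconnected, let B be a hard end-block of D with cut-vertex x, and let (D',F') be the contraction of (D,F) with respect to B. Then (D,F) is a hard pair if and only if (D',F') is a hard pair. -/

import Mathlib

open scoped Classical

/-- A finite digraph with vertex set a `Finset ℕ` and no loops.
Both arcs `(u,v)` and `(v,u)` may be present (a digon). -/
structure Digraph' where
  verts : Finset ℕ
  arcs : Finset (ℕ × ℕ)
  mem_fst : ∀ a ∈ arcs, a.1 ∈ verts
  mem_snd : ∀ a ∈ arcs, a.2 ∈ verts
  no_loops : ∀ a ∈ arcs, a.1 ≠ a.2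

namespace Digraph'

/-- In-degree of `v`. -/
def inDeg (D : Digraph') (v : ℕ) : ℕ := (D.arcs.filter fun a => a.2 = v).card

/-- Out-degree of `v`. -/
def outDeg (D : Digraph') (v : ℕ) : ℕ := (D.arcs.filter fun a => a.1 = v).card

/-- In-neighbourhood of `v`. -/
def inNbrs (D : Digraph') (v : ℕ) : Finset ℕ := (D.arcs.filter fun a => a.2 = v).image Prod.fst

/-- Out-neighbourhood of `v`. -/
def outNbrs (D : Digraph') (v : ℕ) : Finset ℕ := (D.arcs.filter fun a => a.1 = v).image Prod.snd

/-- Neighbourhood of `v` in the underlying graph. -/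
def ugNbrs (D : Digraph') (v : ℕ) : Finset ℕ := D.inNbrs v ∪ D.outNbrs v

/-- `H` is a subdigraph of `D`. -/
def IsSubdigraph (H D : Digraph') : Prop := H.verts ⊆ D.verts ∧ H.arcs ⊆ D.arcs

/-- The subdigraph of `D` induced by the vertex set `X`. -/
def induce (D : Digraph') (X : Finset ℕ) : Digraph' where
  verts := D.verts ∩ X
  arcs := D.arcs.filter fun a => a.1 ∈ X ∧ a.2 ∈ X
  mem_fst := fun a ha => by
    simp only [Finset.mem_filter] at ha
    exact Finset.mem_inter.mpr ⟨D.mem_fst a ha.1, ha.2.1⟩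
  mem_snd := fun a ha => by
    simp only [Finset.mem_filter] at ha
    exact Finset.mem_inter.mpr ⟨D.mem_snd a ha.1, ha.2.2⟩
  no_loops := fun a ha => by
    simp only [Finset.mem_filter] at ha
    exact D.no_loops a ha.1

/-- `D − X`, the digraph obtained from `D` by deleting the vertices of `X`. -/
def del (D : Digraph') (X : Finset ℕ) : Digraph' := D.induce (D.verts \ X)

/-- Adjacency in the underlying graph of `D`. -/
def ugAdj (D : Digraph') (u v : ℕ) : Prop :=
  u ∈ D.verts ∧ v ∈ D.verts ∧ ((u, v) ∈ D.arcs ∨ (v, u) ∈ D.arcs)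

/-- `D` is connected, i.e. its underlying graph is connected. -/
def Connected (D : Digraph') : Prop :=
  D.verts.Nonempty ∧ ∀ u ∈ D.verts, ∀ v ∈ D.verts, Relation.ReflTransGen D.ugAdj u v

/-- `D` is biconnected: it has at least two vertices, is connected, and stays
connected after the deletion of any vertex. -/
def Biconnected (D : Digraph') : Prop :=
  2 ≤ D.verts.card ∧ D.Connected ∧ ∀ x ∈ D.verts, (D.del {x}).Connected

/-- Every arc of `D` lies in a digon. -/
def Bidirected (D : Digraph') : Prop := ∀ a ∈ D.arcs, (a.2, a.1) ∈ D.arcs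

/-- The underlying graph of `D` is a cycle. -/
def IsCycleUG (D : Digraph') : Prop :=
  D.Connected ∧ ∀ v ∈ D.verts, (D.ugNbrs v).card = 2

/-- `D` is a bidirected odd cycle. -/
def BidirectedOddCycle (D : Digraph') : Prop :=
  D.Bidirected ∧ D.IsCycleUG ∧ Odd D.verts.card

/-- `D` is a bidirected complete graph. -/
def BidirectedComplete (D : Digraph') : Prop :=
  ∀ u ∈ D.verts, ∀ v ∈ D.verts, u ≠ v → (u, v) ∈ D.arcs

/-- `D` is strictly-`f`-bidegenerate: every nonempty subdigraph `H` of `D` contains a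
vertex `v` with `d⁻_H(v) < f⁻(v)` or `d⁺_H(v) < f⁺(v)`. -/
def StrictlyBidegenerate (D : Digraph') (f : ℕ → ℕ × ℕ) : Prop :=
  ∀ H : Digraph', H.IsSubdigraph D → H.verts.Nonempty →
    ∃ v ∈ H.verts, H.inDeg v < (f v).1 ∨ H.outDeg v < (f v).2

/-- `α` is an `F`-dicolouring of `D`: for each colour `i`, the subdigraph induced by the
vertices coloured `i` is strictly-`Fᵢ`-bidegenerate. -/
def IsDicolouring (D : Digraph') (s : ℕ) (F : Fin s → ℕ → ℕ × ℕ) (α : ℕ → Fin s) : Prop :=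
  ∀ i : Fin s, (D.induce (D.verts.filter fun v => α v = i)).StrictlyBidegenerate (F i)

/-- `D` is `F`-dicolourable. -/
def Dicolourable (D : Digraph') (s : ℕ) (F : Fin s → ℕ → ℕ × ℕ) : Prop :=
  ∃ α : ℕ → Fin s, D.IsDicolouring s F α

/-- `(D,F)` is a valid pair: `D` is connected and the colour budget dominates the
in- and out-degrees at every vertex. -/
def ValidPair (D : Digraph') (s : ℕ) (F : Fin s → ℕ → ℕ × ℕ) : Prop :=
  D.Connected ∧ ∀ v ∈ D.verts,
    D.inDeg v ≤ ∑ i, (F i v).1 ∧ D.outDeg v ≤ ∑ i, (F i v).2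

/-- `(D,F)` is tight: both budget inequalities are equalities at every vertex. -/
def Tight (D : Digraph') (s : ℕ) (F : Fin s → ℕ → ℕ × ℕ) : Prop :=
  ∀ v ∈ D.verts, ∑ i, (F i v).1 = D.inDeg v ∧ ∑ i, (F i v).2 = D.outDeg v

/-- Hard pairs, defined inductively: monochromatic, bicycle, complete, and join hard pairs. -/
inductive IsHardPair : (s : ℕ) → Digraph' → (Fin s → ℕ → ℕ × ℕ) → Prop
  | mono {s : ℕ} {D : Digraph'} {F : Fin s → ℕ → ℕ × ℕ} (i : Fin s)
      (hbi : D.Biconnected)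
      (hi : ∀ v ∈ D.verts, F i v = (D.inDeg v, D.outDeg v))
      (hk : ∀ k : Fin s, k ≠ i → ∀ v ∈ D.verts, F k v = (0, 0)) :
      IsHardPair s D F
  | bicycle {s : ℕ} {D : Digraph'} {F : Fin s → ℕ → ℕ × ℕ} (i j : Fin s) (hij : i ≠ j)
      (hD : D.BidirectedOddCycle)
      (hi : ∀ v ∈ D.verts, F i v = (1, 1))
      (hj : ∀ v ∈ D.verts, F j v = (1, 1))
      (hk : ∀ k : Fin s, k ≠ i → k ≠ j → ∀ v ∈ D.verts, F k v = (0, 0)) :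
      IsHardPair s D F
  | complete {s : ℕ} {D : Digraph'} {F : Fin s → ℕ → ℕ × ℕ}
      (hD : D.BidirectedComplete)
      (hconst : ∀ k : Fin s, ∀ u ∈ D.verts, ∀ v ∈ D.verts, F k u = F k v)
      (hsym : ∀ k : Fin s, ∀ v ∈ D.verts, (F k v).1 = (F k v).2)
      (hsum : ∀ v ∈ D.verts, ∑ k, (F k v).2 = D.verts.card - 1) :
      IsHardPair s D F
  | join {s : ℕ} {D : Digraph'} {F : Fin s → ℕ → ℕ × ℕ}
      (D₁ D₂ : Digraph') (F₁ F₂ : Fin s → ℕ → ℕ × ℕ) (x : ℕ)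
      (h₁ : IsHardPair s D₁ F₁) (h₂ : IsHardPair s D₂ F₂)
      (hx : D₁.verts ∩ D₂.verts = {x})
      (hV : D.verts = D₁.verts ∪ D₂.verts)
      (hA : D.arcs = D₁.arcs ∪ D₂.arcs)
      (hF₁ : ∀ k : Fin s, ∀ v ∈ D₁.verts, v ≠ x → F k v = F₁ k v)
      (hF₂ : ∀ k : Fin s, ∀ v ∈ D₂.verts, v ≠ x → F k v = F₂ k v)
      (hFx : ∀ k : Fin s, F k x = ((F₁ k x).1 + (F₂ k x).1, (F₁ k x).2 + (F₂ k x).2)) :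
      IsHardPair s D F

/-- The sequence of functions of the pair reduced from `(D,F)` by a colouring `α` of
`X ⊆ V(D)`: the budget of colour `i` at `u` decreases by the number of in- and out-neighbours
of `u` inside `X` coloured `i` (truncated at `0`). -/
def reduceF (D : Digraph') {s : ℕ} (F : Fin s → ℕ → ℕ × ℕ) (X : Finset ℕ) (α : ℕ → Fin s) :
    Fin s → ℕ → ℕ × ℕ :=
  fun i u =>
    ((F i u).1 - ((D.inNbrs u ∩ X).filter fun w => α w = i).card,
     (F i u).2 - ((D.outNbrs u ∩ X).filter fun w => α w = i).card)

/-- `B` is a block of `D`: a maximal biconnected subdigraph. -/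
def IsBlock (B D : Digraph') : Prop :=
  B.IsSubdigraph D ∧ B.Biconnected ∧
    ∀ B' : Digraph', B'.IsSubdigraph D → B'.Biconnected → B.IsSubdigraph B' → B' = B

/-- `x` is a cut-vertex of `D`: `D − x` is disconnected. -/
def CutVertex (D : Digraph') (x : ℕ) : Prop :=
  x ∈ D.verts ∧ (D.del {x}).verts.Nonempty ∧ ¬ (D.del {x}).Connected

/-- `B` is an end-block of `D` whose unique cut-vertex (of `D`) in `B` is `x`. -/
def IsEndBlockAt (B D : Digraph') (x : ℕ) : Prop :=
  IsBlock B D ∧ x ∈ B.verts ∧ D.CutVertex x ∧ ∀ y ∈ B.verts, D.CutVertex y → y = x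

/-- `B` is a monochromatic hard end-block with cut-vertex `x`, for colour `c`. -/
def MonoHardEndBlock {s : ℕ} (F : Fin s → ℕ → ℕ × ℕ) (B : Digraph') (x : ℕ) (c : Fin s) : Prop :=
  B.inDeg x ≤ (F c x).1 ∧ B.outDeg x ≤ (F c x).2 ∧
    ∀ v ∈ B.verts, v ≠ x →
      F c v = (B.inDeg v, B.outDeg v) ∧ ∀ k : Fin s, k ≠ c → F k v = (0, 0)

/-- `B` is a bicycle hard end-block with cut-vertex `x`. -/
def BicycleHardEndBlock {s : ℕ} (F : Fin s → ℕ → ℕ × ℕ) (B : Digraph') (x : ℕ) : Prop :=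
  B.BidirectedOddCycle ∧
    ∃ i j : Fin s, i ≠ j ∧
      1 ≤ (F i x).1 ∧ 1 ≤ (F i x).2 ∧ 1 ≤ (F j x).1 ∧ 1 ≤ (F j x).2 ∧
      ∀ v ∈ B.verts, v ≠ x →
        F i v = (1, 1) ∧ F j v = (1, 1) ∧ ∀ k : Fin s, k ≠ i → k ≠ j → F k v = (0, 0)

/-- `B` is a complete hard end-block with cut-vertex `x`. -/
def CompleteHardEndBlock {s : ℕ} (F : Fin s → ℕ → ℕ × ℕ) (B : Digraph') (x : ℕ) : Prop :=
  B.BidirectedComplete ∧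
    (∀ k : Fin s, ∀ u ∈ B.verts, u ≠ x → ∀ v ∈ B.verts, v ≠ x → F k u = F k v) ∧
    (∀ k : Fin s, ∀ v ∈ B.verts, v ≠ x → (F k v).1 = (F k v).2) ∧
    (∀ k : Fin s, ∀ u ∈ B.verts, u ≠ x → (F k u).1 ≤ (F k x).1 ∧ (F k u).2 ≤ (F k x).2)

/-- `B` is a hard end-block with cut-vertex `x`. -/
def HardEndBlock {s : ℕ} (F : Fin s → ℕ → ℕ × ℕ) (B : Digraph') (x : ℕ) : Prop :=
  (∃ c : Fin s, MonoHardEndBlock F B x c) ∨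
    BicycleHardEndBlock F B x ∨ CompleteHardEndBlock F B x

/-- `(D',F')` is the contraction of `(D,F)` with respect to the hard end-block `B` with
cut-vertex `x`, where `u` is a vertex of `B` other than `x`. -/
def IsContraction (D : Digraph') {s : ℕ} (F : Fin s → ℕ → ℕ × ℕ) (B : Digraph') (x u : ℕ)
    (D' : Digraph') (F' : Fin s → ℕ → ℕ × ℕ) : Prop :=
  D' = D.del (B.verts \ {x}) ∧
  (∀ k : Fin s, ∀ v ∈ D'.verts, v ≠ x → F' k v = F k v) ∧
  ((∃ c : Fin s, MonoHardEndBlock F B x c ∧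
      F' c x = ((F c x).1 - B.inDeg x, (F c x).2 - B.outDeg x) ∧
      ∀ k : Fin s, k ≠ c → F' k x = F k x) ∨
   ((¬ ∃ c : Fin s, MonoHardEndBlock F B x c) ∧
      ∀ k : Fin s, F' k x = ((F k x).1 - (F k u).1, (F k x).2 - (F k u).2)))

/-- Property (E): all the functions exceed `1` in the relevant coordinate at every vertex
having an in-(resp. out-)neighbour. -/
def PropE (D : Digraph') {s : ℕ} (F : Fin s → ℕ → ℕ × ℕ) : Prop :=
  ∀ x ∈ D.verts, ∀ c : Fin s,
    (0 < D.inDeg x → 1 ≤ (F c x).1) ∧ (0 < D.outDeg x → 1 ≤ (F c x).2)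

/-- `C` is a directed cycle: connected, and every vertex has in- and out-degree one. -/
def IsDirectedCycle (C : Digraph') : Prop :=
  C.Connected ∧ ∀ v ∈ C.verts, C.inDeg v = 1 ∧ C.outDeg v = 1

/-- `D` is acyclic: it contains no directed cycle. -/
def AcyclicD (D : Digraph') : Prop :=
  ¬ ∃ C : Digraph', C.IsSubdigraph D ∧ C.IsDirectedCycle

/-- `α` is a `k`-dicolouring of `D`: every colour class induces an acyclic subdigraph. -/
def IsKDicolouring (D : Digraph') (k : ℕ) (α : ℕ → Fin k) : Prop :=
  ∀ i : Fin k, AcyclicD (D.induce (D.verts.filter fun v => α v = i))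

/-- The dichromatic number of `D`. -/
noncomputable def dichromatic (D : Digraph') : ℕ :=
  sInf {k : ℕ | ∃ α : ℕ → Fin k, D.IsKDicolouring k α}

end Digraph'

/-!
Every arc at a vertex of the end-block `B` other than `x` lies in `B` (otherwise an ear would
enlarge the block), so `D` is the join at `x` of `B` and `D' = D - (V(B) ∖ {x})`. A hard pair
splits into hard pairs along any join, by induction over the join construction. On the biconnected
`B` the resulting hard pair is monochromatic, or constant on a regular digraph (bicycle, complete),
and the hard end-block then pins its value at `x` down to exactly the amount `γ` that the
contraction removes from `F` at `x`; so the hard pair left on `D'` is `(D', F')`. Conversely,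
`(D', F')` joined at `x` with `B` carrying `F` modified to `γ` at `x` is a join of hard pairs.
-/

theorem List.IsChain.reflTransGen_of_mem {α : Type*} {r : α → α → Prop} [Std.Symm r]
    {l : List α} (hl : l.IsChain r) {a b : α} (ha : a ∈ l) (hb : b ∈ l) :
    Relation.ReflTransGen r a b := by
  have hne : l ≠ [] := List.ne_nil_of_mem ha
  have hhead : ∀ c ∈ l, Relation.ReflTransGen r (l.head hne) c :=
    hl.induction _ _ (fun _ _ h hc => hc.tail h) fun _ => .refl
  exact (Std.Symm.symm _ _ (hhead a ha)).trans (hhead b hb)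

/-- Cutting the closed subwalks out of a walk from `w` into `S` leaves an ear `w :: L` ending at
`z ∈ S`. -/
theorem exists_ear {α : Type*} {r : α → α → Prop} {S : Set α} {w b : α}
    (h : Relation.ReflTransGen r w b) (hb : b ∈ S) (hw : w ∉ S) :
    ∃ L z, z ∈ S ∧ (w :: L ++ [z]).IsChain r ∧ (w :: L).Nodup ∧ ∀ p ∈ w :: L, p ∉ S := by
  induction h using Relation.ReflTransGen.head_induction_on with
  | refl => exact absurd hb hw
  | @head w c hwc _ ih =>
    by_cases hc : c ∈ S
    · exact ⟨[], c, hc, List.isChain_pair.2 hwc, List.nodup_singleton w, by simpa using hw⟩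
    obtain ⟨L, z, hz, hchain, hnd, hout⟩ := ih hc
    by_cases hwL : w ∈ c :: L
    · obtain ⟨l₁, l₂, hsplit⟩ := List.append_of_mem hwL
      have hsuf : w :: l₂ <:+ c :: L := ⟨l₁, hsplit.symm⟩
      refine ⟨l₂, z, hz, hchain.suffix ?_, hnd.sublist hsuf.sublist,
        fun p hp => hout p (hsuf.subset hp)⟩
      rw [List.cons_append, ← List.cons_append, hsplit]
      exact ⟨l₁, by simp⟩
    · exact ⟨c :: L, z, hz, hchain.cons_cons hwc, List.nodup_cons.2 ⟨hwL, hnd⟩,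
        List.forall_mem_cons.2 ⟨hw, hout⟩⟩

/-- `y` occurs at most once on the path, so it cuts the path into at most two segments. -/
theorem List.exists_infix_mem_of_nodup {α : Type*} {a b y p : α} {L : List α} (hnd : L.Nodup)
    (ha : a ∉ L) (hb : b ∉ L) (hab : a ≠ b) (hp : p ∈ L) (hpy : p ≠ y) :
    ∃ M, M <:+: a :: L ++ [b] ∧ y ∉ M ∧ p ∈ M ∧ (a ∈ M ∨ b ∈ M) := by
  by_cases hyL : y ∈ L
  · have hya : y ≠ a := fun h => ha (h ▸ hyL)
    have hyb : y ≠ b := fun h => hb (h ▸ hyL)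
    obtain ⟨l₁, l₂, rfl⟩ := List.append_of_mem hyL
    have hy := (List.nodup_cons.1 (List.nodup_middle.1 hnd)).1
    have hy₁ : y ∉ l₁ := fun h => hy (List.mem_append_left _ h)
    have hy₂ : y ∉ l₂ := fun h => hy (List.mem_append_right _ h)
    rcases List.mem_append.1 hp with hp | hp
    · exact ⟨a :: l₁, ⟨[], y :: l₂ ++ [b], by simp⟩, by simp [hya, hy₁],
        List.mem_cons_of_mem _ hp, Or.inl List.mem_cons_self⟩
    · exact ⟨l₂ ++ [b], ⟨a :: l₁ ++ [y], [], by simp⟩, by simp [hyb, hy₂],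
        List.mem_append_left _ ((List.mem_cons.1 hp).resolve_left hpy), Or.inr (by simp)⟩
  · by_cases hya : y = a
    · subst hya
      exact ⟨L ++ [b], ⟨[y], [], by simp⟩, by simp [hyL, hab], List.mem_append_left _ hp,
        Or.inr (by simp)⟩
    · exact ⟨a :: L, ⟨[], [b], by simp⟩, by simp [hya, hyL], List.mem_cons_of_mem _ hp,
        Or.inl List.mem_cons_self⟩

theorem even_sum_sum_of_symm {α : Type*} [LinearOrder α] {S : Finset α} {f : α → α → ℕ}
    (hf : ∀ v w, f v w = f w v) (hd : ∀ v, f v v = 0) : Even (∑ v ∈ S, ∑ w ∈ S, f v w) := by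
  refine ⟨∑ v ∈ S, ∑ w ∈ S, if v < w then f v w else 0, ?_⟩
  calc ∑ v ∈ S, ∑ w ∈ S, f v w
      = ∑ v ∈ S, ∑ w ∈ S, ((if v < w then f v w else 0) + if w < v then f w v else 0) := by
        refine Finset.sum_congr rfl fun v _ => Finset.sum_congr rfl fun w _ => ?_
        rcases lt_trichotomy v w with h | rfl | h
        · simp [h, h.not_gt]
        · simp [hd]
        · simp [h, h.not_gt, hf]
    _ = _ := by
        simp only [Finset.sum_add_distrib]
        rw [Finset.sum_comm (f := fun v w => if w < v then f w v else 0)]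

namespace Digraph'

open Relation

variable {D E H A B C D₁ D₂ E₁ E₂ P : Digraph'} {X Y : Finset ℕ} {a : ℕ × ℕ}
  {x y u v w p q v₁ v₂ : ℕ} {s : ℕ} {F G F₁ F₂ G₁ G₂ H₁ H₂ : Fin s → ℕ → ℕ × ℕ}
  {γ : Fin s → ℕ × ℕ} {k c : Fin s}

@[ext] lemma ext (hv : D.verts = E.verts) (ha : D.arcs = E.arcs) : D = E := by
  cases D; cases E; cases hv; cases ha; rfl

@[simp] lemma mem_inNbrs : w ∈ D.inNbrs v ↔ (w, v) ∈ D.arcs := by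
  simp only [inNbrs, Finset.mem_image, Finset.mem_filter]
  exact ⟨fun ⟨⟨_, _⟩, ⟨h, rfl⟩, rfl⟩ => h, fun h => ⟨_, ⟨h, rfl⟩, rfl⟩⟩

@[simp] lemma mem_outNbrs : w ∈ D.outNbrs v ↔ (v, w) ∈ D.arcs := by
  simp only [outNbrs, Finset.mem_image, Finset.mem_filter]
  exact ⟨fun ⟨⟨_, _⟩, ⟨h, rfl⟩, rfl⟩ => h, fun h => ⟨_, ⟨h, rfl⟩, rfl⟩⟩

@[simp] lemma mem_ugNbrs : w ∈ D.ugNbrs v ↔ (w, v) ∈ D.arcs ∨ (v, w) ∈ D.arcs := by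
  simp [ugNbrs]

lemma inDeg_eq_card_inNbrs : D.inDeg v = (D.inNbrs v).card :=
  (Finset.card_image_of_injOn fun _ ha _ hb hab =>
    Prod.ext hab ((Finset.mem_filter.1 ha).2.trans (Finset.mem_filter.1 hb).2.symm)).symm

lemma outDeg_eq_card_outNbrs : D.outDeg v = (D.outNbrs v).card :=
  (Finset.card_image_of_injOn fun _ ha _ hb hab =>
    Prod.ext ((Finset.mem_filter.1 ha).2.trans (Finset.mem_filter.1 hb).2.symm) hab).symm

lemma ugNbrs_subset_verts : D.ugNbrs v ⊆ D.verts := by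
  intro w hw
  rcases mem_ugNbrs.1 hw with h | h
  exacts [D.mem_fst _ h, D.mem_snd _ h]

lemma notMem_ugNbrs_self : v ∉ D.ugNbrs v := by
  rw [mem_ugNbrs]
  rintro (h | h) <;> exact D.no_loops _ h rfl

lemma ugAdj_iff : D.ugAdj u v ↔ (u, v) ∈ D.arcs ∨ (v, u) ∈ D.arcs := by
  refine ⟨fun h => h.2.2, fun h => ⟨?_, ?_, h⟩⟩ <;> rcases h with h | h
  exacts [D.mem_fst _ h, D.mem_snd _ h, D.mem_snd _ h, D.mem_fst _ h]

lemma ugAdj_iff_mem_ugNbrs : D.ugAdj u v ↔ v ∈ D.ugNbrs u := by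
  rw [ugAdj_iff, mem_ugNbrs, or_comm]

instance : Std.Symm D.ugAdj where
  symm _ _ h := ⟨h.2.1, h.1, h.2.2.symm⟩

lemma ugAdj_comm : D.ugAdj u v ↔ D.ugAdj v u :=
  ⟨Std.Symm.symm _ _, Std.Symm.symm _ _⟩

lemma reflTransGen_symm (h : ReflTransGen D.ugAdj u v) : ReflTransGen D.ugAdj v u :=
  Std.Symm.symm _ _ h

lemma connected_of_forall_reflTransGen (hx : x ∈ D.verts)
    (h : ∀ v ∈ D.verts, ReflTransGen D.ugAdj v x) : D.Connected :=
  ⟨⟨x, hx⟩, fun u hu v hv => (h u hu).trans (reflTransGen_symm (h v hv))⟩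

lemma Connected.ugNbrs_nonempty (hD : D.Connected) (hcard : 2 ≤ D.verts.card)
    (hv : v ∈ D.verts) : (D.ugNbrs v).Nonempty := by
  obtain ⟨w, hw, hwv⟩ := Finset.exists_mem_ne hcard v
  rcases (hD.2 v hv w hw).cases_head with rfl | ⟨c, hvc, -⟩
  · exact absurd rfl hwv
  · exact ⟨c, ugAdj_iff_mem_ugNbrs.1 hvc⟩

def deg (D : Digraph') (v : ℕ) : ℕ × ℕ := (D.inDeg v, D.outDeg v)

lemma Connected.deg_ne_zero (hD : D.Connected) (hcard : 2 ≤ D.verts.card)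
    (hv : v ∈ D.verts) : D.deg v ≠ 0 := by
  obtain ⟨w, hw⟩ := hD.ugNbrs_nonempty hcard hv
  have hpos : 0 < D.inDeg v ∨ 0 < D.outDeg v := by
    rw [inDeg_eq_card_inNbrs, outDeg_eq_card_outNbrs, Finset.card_pos, Finset.card_pos]
    exact (mem_ugNbrs.1 hw).imp (fun h => ⟨w, mem_inNbrs.2 h⟩) fun h => ⟨w, mem_outNbrs.2 h⟩
  simp only [deg, Ne, Prod.mk_eq_zero]
  omega

lemma ugNbrs_subset_erase : D.ugNbrs v ⊆ D.verts.erase v := fun _ hw =>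
  Finset.mem_erase.2 ⟨fun h => notMem_ugNbrs_self (h ▸ hw), ugNbrs_subset_verts hw⟩

@[simp] lemma induce_verts : (D.induce X).verts = D.verts ∩ X := rfl

@[simp] lemma mem_induce_arcs : a ∈ (D.induce X).arcs ↔ a ∈ D.arcs ∧ a.1 ∈ X ∧ a.2 ∈ X :=
  Finset.mem_filter

@[simp] lemma del_verts : (D.del X).verts = D.verts \ X := by
  simp [del, Finset.inter_eq_right.2 Finset.sdiff_subset]

@[simp] lemma mem_del_arcs : a ∈ (D.del X).arcs ↔ a ∈ D.arcs ∧ a.1 ∉ X ∧ a.2 ∉ X := by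
  simp only [del, mem_induce_arcs, Finset.mem_sdiff]
  exact ⟨fun ⟨h, ⟨_, h₁⟩, ⟨_, h₂⟩⟩ => ⟨h, h₁, h₂⟩,
    fun ⟨h, h₁, h₂⟩ => ⟨h, ⟨D.mem_fst _ h, h₁⟩, ⟨D.mem_snd _ h, h₂⟩⟩⟩

lemma ugAdj_induce : (D.induce X).ugAdj u v ↔ D.ugAdj u v ∧ u ∈ X ∧ v ∈ X := by
  simp only [ugAdj_iff, mem_induce_arcs]
  tauto

lemma del_induce : (D.induce X).del Y = D.induce (X \ Y) := by
  ext a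
  · simp [and_assoc]
  · simp only [mem_del_arcs, mem_induce_arcs, Finset.mem_sdiff]
    tauto

lemma del_eq_self (hy : y ∉ D.verts) : D.del {y} = D := by
  ext a
  · simp only [del_verts, Finset.sdiff_singleton_eq_erase, Finset.erase_eq_of_notMem hy]
  · simp only [mem_del_arcs, Finset.mem_singleton]
    exact ⟨fun h => h.1, fun h => ⟨h, fun h' => hy (h' ▸ D.mem_fst a h),
      fun h' => hy (h' ▸ D.mem_snd a h)⟩⟩

lemma induce_isSubdigraph : (D.induce X).IsSubdigraph D :=
  ⟨Finset.inter_subset_left, fun _ h => (mem_induce_arcs.1 h).1⟩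

lemma IsSubdigraph.isSubdigraph_induce (h : H.IsSubdigraph D) (hX : H.verts ⊆ X) :
    H.IsSubdigraph (D.induce X) :=
  ⟨Finset.subset_inter h.1 hX, fun a ha =>
    mem_induce_arcs.2 ⟨h.2 ha, hX (H.mem_fst a ha), hX (H.mem_snd a ha)⟩⟩

lemma IsSubdigraph.del (h : H.IsSubdigraph D) (X : Finset ℕ) :
    (H.del X).IsSubdigraph (D.del X) :=
  ⟨fun p hp => by simp only [del_verts, Finset.mem_sdiff] at hp ⊢; exact ⟨h.1 hp.1, hp.2⟩,
    fun a ha => by simp only [mem_del_arcs] at ha ⊢; exact ⟨h.2 ha.1, ha.2⟩⟩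

lemma del_isSubdigraph : (D.del X).IsSubdigraph D := induce_isSubdigraph

lemma IsSubdigraph.ugAdj (h : H.IsSubdigraph D) (huv : H.ugAdj u v) : D.ugAdj u v :=
  ⟨h.1 huv.1, h.1 huv.2.1, huv.2.2.imp (h.2 ·) (h.2 ·)⟩

lemma IsSubdigraph.reflTransGen (h : H.IsSubdigraph D) (huv : ReflTransGen H.ugAdj u v) :
    ReflTransGen D.ugAdj u v :=
  ReflTransGen.mono (fun _ _ => h.ugAdj) _ _ huv

lemma Connected.mono (hH : H.Connected) (h : H.IsSubdigraph D) (hv : D.verts ⊆ H.verts) :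
    D.Connected :=
  ⟨hH.1.mono h.1, fun u hu v hv' => h.reflTransGen (hH.2 u (hv hu) v (hv hv'))⟩

lemma Biconnected.mono (hH : H.Biconnected) (h : H.IsSubdigraph D) (hv : D.verts ⊆ H.verts) :
    D.Biconnected :=
  ⟨hH.1.trans (Finset.card_le_card h.1), hH.2.1.mono h hv, fun y hy =>
    (hH.2.2 y (hv hy)).mono (h.del _) fun p hp => by
      simp only [del_verts, Finset.mem_sdiff] at hp ⊢; exact ⟨hv hp.1, hp.2⟩⟩

lemma Biconnected.del_connected (hH : H.Biconnected) (y : ℕ) : (H.del {y}).Connected := by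
  by_cases hy : y ∈ H.verts
  · exact hH.2.2 y hy
  · rw [del_eq_self hy]
    exact hH.2.1

lemma reflTransGen_induce_of_isChain {l : List ℕ} (hl : l.IsChain D.ugAdj)
    (hX : ∀ p ∈ l, p ∈ X) (hp : p ∈ l) (hq : q ∈ l) : ReflTransGen (D.induce X).ugAdj p q :=
  (hl.imp_of_mem_imp fun _ _ hc hd h => ugAdj_induce.2 ⟨h, hX _ hc, hX _ hd⟩).reflTransGen_of_mem
    hp hq

lemma Bidirected.inNbrs_eq (hD : D.Bidirected) : D.inNbrs v = D.ugNbrs v := by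
  ext w
  simp only [mem_inNbrs, mem_ugNbrs]
  exact ⟨Or.inl, fun h => h.elim id (hD _)⟩

lemma Bidirected.outNbrs_eq (hD : D.Bidirected) : D.outNbrs v = D.ugNbrs v := by
  ext w
  simp only [mem_outNbrs, mem_ugNbrs]
  exact ⟨Or.inr, fun h => h.elim (hD _) id⟩

lemma BidirectedOddCycle.deg_eq (hD : D.BidirectedOddCycle) (hv : v ∈ D.verts) :
    D.deg v = (2, 2) := by
  rw [deg, inDeg_eq_card_inNbrs, outDeg_eq_card_outNbrs, hD.1.inNbrs_eq, hD.1.outNbrs_eq,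
    hD.2.1.2 v hv]

lemma BidirectedComplete.inNbrs_eq (hD : D.BidirectedComplete) (hv : v ∈ D.verts) :
    D.inNbrs v = D.verts.erase v := by
  ext w
  rw [mem_inNbrs, Finset.mem_erase]
  exact ⟨fun h => ⟨D.no_loops _ h, D.mem_fst _ h⟩, fun h => hD w h.2 v hv h.1⟩

lemma BidirectedComplete.outNbrs_eq (hD : D.BidirectedComplete) (hv : v ∈ D.verts) :
    D.outNbrs v = D.verts.erase v := by
  ext w
  rw [mem_outNbrs, Finset.mem_erase]
  exact ⟨fun h => ⟨(D.no_loops _ h).symm, D.mem_snd _ h⟩, fun h => hD v hv w h.2 h.1.symm⟩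

lemma BidirectedComplete.outDeg_eq (hD : D.BidirectedComplete) (hv : v ∈ D.verts) :
    D.outDeg v = D.verts.card - 1 := by
  rw [outDeg_eq_card_outNbrs, hD.outNbrs_eq hv, Finset.card_erase_of_mem hv]

lemma BidirectedComplete.deg_eq (hD : D.BidirectedComplete) (hv : v ∈ D.verts) :
    D.deg v = (D.verts.card - 1, D.verts.card - 1) := by
  rw [deg, hD.outDeg_eq hv, inDeg_eq_card_inNbrs, hD.inNbrs_eq hv, Finset.card_erase_of_mem hv]

/-! ### Joins at a vertex -/

lemma even_sum_card_ugNbrs (D : Digraph') : Even (∑ v ∈ D.verts, (D.ugNbrs v).card) := by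
  have h : ∀ v ∈ D.verts, (D.ugNbrs v).card = ∑ w ∈ D.verts, if w ∈ D.ugNbrs v then 1 else 0 :=
    fun v _ => by
      rw [← Finset.card_filter, Finset.filter_mem_eq_inter,
        Finset.inter_eq_right.2 ugNbrs_subset_verts]
  rw [Finset.sum_congr rfl h]
  exact even_sum_sum_of_symm (fun v w => by simp only [mem_ugNbrs, or_comm])
    fun v => if_neg notMem_ugNbrs_self

def inter (A C : Digraph') : Digraph' where
  verts := A.verts ∩ C.verts
  arcs := A.arcs ∩ C.arcs
  mem_fst a ha := Finset.mem_inter.2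
    ⟨A.mem_fst a (Finset.mem_inter.1 ha).1, C.mem_fst a (Finset.mem_inter.1 ha).2⟩
  mem_snd a ha := Finset.mem_inter.2
    ⟨A.mem_snd a (Finset.mem_inter.1 ha).1, C.mem_snd a (Finset.mem_inter.1 ha).2⟩
  no_loops a ha := A.no_loops a (Finset.mem_inter.1 ha).1

@[simp] lemma inter_verts : (inter A C).verts = A.verts ∩ C.verts := rfl

@[simp] lemma inter_arcs : (inter A C).arcs = A.arcs ∩ C.arcs := rfl

lemma inter_comm : inter A C = inter C A :=
  Digraph'.ext (Finset.inter_comm _ _) (Finset.inter_comm _ _)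

lemma inter_eq_right (h : C.IsSubdigraph A) : inter A C = C :=
  Digraph'.ext (Finset.inter_eq_right.2 h.1) (Finset.inter_eq_right.2 h.2)

structure IsJoin (D D₁ D₂ : Digraph') (x : ℕ) : Prop where
  inter_eq : D₁.verts ∩ D₂.verts = {x}
  verts_eq : D.verts = D₁.verts ∪ D₂.verts
  arcs_eq : D.arcs = D₁.arcs ∪ D₂.arcs

namespace IsJoin

lemma symm (hJ : IsJoin D D₁ D₂ x) : IsJoin D D₂ D₁ x :=
  ⟨by rw [Finset.inter_comm, hJ.inter_eq], by rw [Finset.union_comm, hJ.verts_eq],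
    by rw [Finset.union_comm, hJ.arcs_eq]⟩

lemma mem_left (hJ : IsJoin D D₁ D₂ x) : x ∈ D₁.verts :=
  (Finset.mem_inter.1 (hJ.inter_eq ▸ Finset.mem_singleton_self x)).1

lemma mem_right (hJ : IsJoin D D₁ D₂ x) : x ∈ D₂.verts := hJ.symm.mem_left

lemma eq_of_mem (hJ : IsJoin D D₁ D₂ x) (h₁ : v ∈ D₁.verts) (h₂ : v ∈ D₂.verts) : v = x :=
  Finset.mem_singleton.1 (hJ.inter_eq ▸ Finset.mem_inter.2 ⟨h₁, h₂⟩)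

lemma isSubdigraph_left (hJ : IsJoin D D₁ D₂ x) : D₁.IsSubdigraph D :=
  ⟨hJ.verts_eq ▸ Finset.subset_union_left, hJ.arcs_eq ▸ Finset.subset_union_left⟩

lemma isSubdigraph_right (hJ : IsJoin D D₁ D₂ x) : D₂.IsSubdigraph D := hJ.symm.isSubdigraph_left

lemma mem_arcs_left (hJ : IsJoin D D₁ D₂ x) (ha : a ∈ D.arcs) (hp : p = a.1 ∨ p = a.2)
    (hp₁ : p ∈ D₁.verts) (hpx : p ≠ x) : a ∈ D₁.arcs := by
  refine (Finset.mem_union.1 (hJ.arcs_eq ▸ ha)).resolve_right fun h => hpx (hJ.eq_of_mem hp₁ ?_)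
  rcases hp with rfl | rfl
  exacts [D₂.mem_fst _ h, D₂.mem_snd _ h]

lemma arcs_disjoint (hJ : IsJoin D D₁ D₂ x) (h₁ : a ∈ D₁.arcs) (h₂ : a ∈ D₂.arcs) : False :=
  D₁.no_loops a h₁ ((hJ.eq_of_mem (D₁.mem_fst a h₁) (D₂.mem_fst a h₂)).trans
    (hJ.eq_of_mem (D₁.mem_snd a h₁) (D₂.mem_snd a h₂)).symm)

lemma ugAdj_left (hJ : IsJoin D D₁ D₂ x) (h : D.ugAdj p q) (hp : p ∈ D₁.verts) (hpx : p ≠ x) :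
    D₁.ugAdj p q := by
  rw [ugAdj_iff] at h ⊢
  exact h.imp (hJ.mem_arcs_left · (Or.inl rfl) hp hpx) (hJ.mem_arcs_left · (Or.inr rfl) hp hpx)

lemma ugNbrs_left (hJ : IsJoin D D₁ D₂ x) (hv : v ∈ D₁.verts) (hvx : v ≠ x) :
    D₁.ugNbrs v = D.ugNbrs v := by
  ext w
  rw [← ugAdj_iff_mem_ugNbrs, ← ugAdj_iff_mem_ugNbrs]
  exact ⟨hJ.isSubdigraph_left.ugAdj, fun h => hJ.ugAdj_left h hv hvx⟩

lemma card_ugNbrs (hJ : IsJoin D D₁ D₂ x) :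
    (D.ugNbrs x).card = (D₁.ugNbrs x).card + (D₂.ugNbrs x).card := by
  rw [← Finset.card_union_of_disjoint]
  · congr 1
    ext w
    simp only [Finset.mem_union, mem_ugNbrs, hJ.arcs_eq]
    tauto
  · exact Finset.disjoint_left.2 fun w h₁ h₂ => notMem_ugNbrs_self
      (hJ.eq_of_mem (ugNbrs_subset_verts h₁) (ugNbrs_subset_verts h₂) ▸ h₁)

lemma outDeg_left (hJ : IsJoin D D₁ D₂ x) (hv : v ∈ D₁.verts) (hvx : v ≠ x) :
    D.outDeg v = D₁.outDeg v := by
  unfold outDeg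
  congr 1
  ext a
  simp only [Finset.mem_filter]
  exact ⟨fun ⟨ha, h⟩ => ⟨hJ.mem_arcs_left ha (Or.inl h.symm) hv hvx, h⟩,
    fun ⟨ha, h⟩ => ⟨hJ.isSubdigraph_left.2 ha, h⟩⟩

lemma mem_left_of_reflTransGen (hJ : IsJoin D D₁ D₂ x) {R : ℕ → ℕ → Prop}
    (hR : ∀ p q, R p q → D.ugAdj p q ∧ p ≠ x) (h : ReflTransGen R u v) (hu : u ∈ D₁.verts) :
    v ∈ D₁.verts := by
  induction h with
  | refl => exact hu
  | tail _ hpq ih => exact (hJ.ugAdj_left (hR _ _ hpq).1 ih (hR _ _ hpq).2).2.1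

lemma connected_left (hJ : IsJoin D D₁ D₂ x) (hD : D.Connected) : D₁.Connected := by
  refine connected_of_forall_reflTransGen hJ.mem_left fun v hv => ?_
  have h := hD.2 v (hJ.isSubdigraph_left.1 hv) x (hJ.isSubdigraph_left.1 hJ.mem_left)
  induction h using ReflTransGen.head_induction_on with
  | refl => exact .refl
  | @head v c hvc _ ih =>
    by_cases hvx : v = x
    · exact hvx ▸ .refl
    · have hvc' := hJ.ugAdj_left hvc hv hvx
      exact .head hvc' (ih hvc'.2.1)

lemma connected (hJ : IsJoin D D₁ D₂ x) (h₁ : D₁.Connected) (h₂ : D₂.Connected) :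
    D.Connected := by
  refine connected_of_forall_reflTransGen (hJ.isSubdigraph_left.1 hJ.mem_left) fun v hv => ?_
  rcases Finset.mem_union.1 (hJ.verts_eq ▸ hv) with hv | hv
  · exact hJ.isSubdigraph_left.reflTransGen (h₁.2 v hv x hJ.mem_left)
  · exact hJ.isSubdigraph_right.reflTransGen (h₂.2 v hv x hJ.mem_right)

lemma restrict (hJ : IsJoin D D₁ D₂ x) (hA : A.IsSubdigraph D) (hx : x ∈ A.verts) :
    IsJoin A (inter A D₁) (inter A D₂) x where
  inter_eq := by
    rw [Digraph'.inter_verts, Digraph'.inter_verts, ← Finset.inter_inter_distrib_left,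
      hJ.inter_eq, Finset.inter_singleton_of_mem hx]
  verts_eq := by
    rw [Digraph'.inter_verts, Digraph'.inter_verts, ← Finset.inter_union_distrib_left,
      ← hJ.verts_eq, Finset.inter_eq_left.2 hA.1]
  arcs_eq := by
    rw [inter_arcs, inter_arcs, ← Finset.inter_union_distrib_left, ← hJ.arcs_eq,
      Finset.inter_eq_left.2 hA.2]

lemma isSubdigraph_left_of_connected (hJ : IsJoin D D₁ D₂ x) (hA : A.IsSubdigraph D)
    (hc : A.Connected) (hx : x ∉ A.verts) (hy : y ∈ A.verts) (hy₁ : y ∈ D₁.verts) :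
    A.IsSubdigraph D₁ := by
  have hverts : A.verts ⊆ D₁.verts := fun v hv => hJ.mem_left_of_reflTransGen
    (fun p q hpq => ⟨hA.ugAdj hpq, fun h => hx (h ▸ hpq.1)⟩) (hc.2 y hy v hv) hy₁
  exact ⟨hverts, fun a ha => hJ.mem_arcs_left (hA.2 ha) (Or.inl rfl) (hverts (A.mem_fst a ha))
    fun h => hx (h ▸ A.mem_fst a ha)⟩

lemma isSubdigraph_of_isSubdigraph (hE : IsJoin D E₁ E₂ y) (hJ : IsJoin D D₁ D₂ x)
    (h : E₂.IsSubdigraph D₁) (hx : x ∈ E₁.verts) : D₂.IsSubdigraph E₁ := by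
  refine ⟨fun v hv => ?_, fun a ha => ?_⟩
  · rcases Finset.mem_union.1 (hE.verts_eq ▸ hJ.isSubdigraph_right.1 hv) with h' | h'
    · exact h'
    · exact hJ.eq_of_mem (h.1 h') hv ▸ hx
  · rcases Finset.mem_union.1 (hE.arcs_eq ▸ hJ.isSubdigraph_right.2 ha) with h' | h'
    · exact h'
    · exact (hJ.arcs_disjoint (h.2 h') ha).elim

lemma eq_right_of_left_singleton (hJ : IsJoin D D₁ D₂ x) (h : D₁.verts = {x}) : D = D₂ := by
  have harcs : D₁.arcs = ∅ := Finset.eq_empty_of_forall_notMem fun a ha => D₁.no_loops a ha <| by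
    have h₁ := D₁.mem_fst a ha
    have h₂ := D₁.mem_snd a ha
    rw [h, Finset.mem_singleton] at h₁ h₂
    rw [h₁, h₂]
  refine Digraph'.ext ?_ ?_
  · rw [hJ.verts_eq, h, Finset.union_eq_right.2 (Finset.singleton_subset_iff.2 hJ.mem_right)]
  · rw [hJ.arcs_eq, harcs, Finset.empty_union]

lemma left_or_right_singleton (hJ : IsJoin D D₁ D₂ x)
    (H : ∀ v₁ ∈ D₁.verts, v₁ ≠ x → ∀ v₂ ∈ D₂.verts, v₂ ≠ x → False) :
    D₁.verts = {x} ∨ D₂.verts = {x} := by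
  by_contra h
  rw [not_or] at h
  obtain ⟨v₁, hv₁, h₁⟩ := ((Finset.nontrivial_iff_ne_singleton hJ.mem_left).2 h.1).exists_ne x
  obtain ⟨v₂, hv₂, h₂⟩ := ((Finset.nontrivial_iff_ne_singleton hJ.mem_right).2 h.2).exists_ne x
  exact H v₁ hv₁ h₁ v₂ hv₂ h₂

lemma not_biconnected (hJ : IsJoin D D₁ D₂ x) (hv₁ : v₁ ∈ D₁.verts) (h₁ : v₁ ≠ x)
    (hv₂ : v₂ ∈ D₂.verts) (h₂ : v₂ ≠ x) : ¬ D.Biconnected := by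
  intro hD
  have hconn := hD.2.2 x (hJ.isSubdigraph_left.1 hJ.mem_left)
  have hw := hconn.2 v₁ (by simp [hJ.isSubdigraph_left.1 hv₁, h₁]) v₂
    (by simp [hJ.isSubdigraph_right.1 hv₂, h₂])
  refine h₂ (hJ.eq_of_mem (hJ.mem_left_of_reflTransGen (fun p q hpq => ?_) hw hv₁) hv₂)
  have hp := hpq.1
  rw [del_verts, Finset.mem_sdiff, Finset.mem_singleton] at hp
  exact ⟨del_isSubdigraph.ugAdj hpq, hp.2⟩

lemma not_bidirectedComplete (hJ : IsJoin D D₁ D₂ x) (hv₁ : v₁ ∈ D₁.verts) (h₁ : v₁ ≠ x)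
    (hv₂ : v₂ ∈ D₂.verts) (h₂ : v₂ ≠ x) : ¬ D.BidirectedComplete := by
  intro hD
  have hne : v₁ ≠ v₂ := fun h => h₁ (hJ.eq_of_mem hv₁ (h ▸ hv₂))
  rcases Finset.mem_union.1 (hJ.arcs_eq ▸ hD v₁ (hJ.isSubdigraph_left.1 hv₁) v₂
    (hJ.isSubdigraph_right.1 hv₂) hne) with h | h
  · exact h₂ (hJ.eq_of_mem (D₁.mem_snd _ h) hv₂)
  · exact h₁ (hJ.eq_of_mem hv₁ (D₂.mem_fst _ h))

lemma even_card_ugNbrs_left (hJ : IsJoin D D₁ D₂ x)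
    (hdeg : ∀ v ∈ D.verts, (D.ugNbrs v).card = 2) : Even (D₁.ugNbrs x).card := by
  have hrest : ∀ v ∈ D₁.verts.erase x, (D₁.ugNbrs v).card = 2 := fun v hv => by
    rw [hJ.ugNbrs_left (Finset.mem_of_mem_erase hv) (Finset.ne_of_mem_erase hv)]
    exact hdeg v (hJ.isSubdigraph_left.1 (Finset.mem_of_mem_erase hv))
  have h := even_sum_card_ugNbrs D₁
  rw [← Finset.add_sum_erase _ _ hJ.mem_left, Finset.sum_congr rfl hrest, Finset.sum_const,
    smul_eq_mul] at h
  exact (Nat.even_add.1 h).2 (Nat.even_mul.2 (Or.inr even_two))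

/-- In a cycle, each side of a proper join would contain an even, nonzero number of the two
neighbours of `x`. -/
lemma not_isCycleUG (hJ : IsJoin D D₁ D₂ x) (hv₁ : v₁ ∈ D₁.verts) (h₁ : v₁ ≠ x)
    (hv₂ : v₂ ∈ D₂.verts) (h₂ : v₂ ≠ x) : ¬ D.IsCycleUG := by
  intro hD
  have side : ∀ {P Q : Digraph'}, IsJoin D P Q x → ∀ v ∈ P.verts, v ≠ x →
      2 ≤ (P.ugNbrs x).card := by
    intro P Q hPQ v hv hvx
    have hpos := ((hPQ.connected_left hD.1).ugNbrs_nonempty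
      (Finset.one_lt_card.2 ⟨v, hv, x, hPQ.mem_left, hvx⟩) hPQ.mem_left).card_pos
    obtain ⟨k, hk⟩ := hPQ.even_card_ugNbrs_left hD.2
    omega
  have := side hJ v₁ hv₁ h₁
  have := side hJ.symm v₂ hv₂ h₂
  have := hJ.card_ugNbrs
  have := hD.2 x (hJ.isSubdigraph_left.1 hJ.mem_left)
  omega

end IsJoin

/-! ### Splitting hard pairs -/

lemma IsHardPair.congr (h : IsHardPair s D F) (hFG : ∀ k, Set.EqOn (F k) (G k) D.verts) :
    IsHardPair s D G := by
  cases h with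
  | mono i hbi hi hk =>
    exact .mono i hbi (fun v hv => (hFG i hv).symm.trans (hi v hv))
      fun k hki v hv => (hFG k hv).symm.trans (hk k hki v hv)
  | bicycle i j hij hD hi hj hk =>
    exact .bicycle i j hij hD (fun v hv => (hFG i hv).symm.trans (hi v hv))
      (fun v hv => (hFG j hv).symm.trans (hj v hv))
      fun k hki hkj v hv => (hFG k hv).symm.trans (hk k hki hkj v hv)
  | complete hD hconst hsym hsum =>
    refine .complete hD (fun k u hu v hv => ?_) (fun k v hv => ?_) fun v hv => ?_
    · rw [← hFG k hu, ← hFG k hv]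
      exact hconst k u hu v hv
    · rw [← hFG k hv]
      exact hsym k v hv
    · simpa only [hFG _ hv] using hsum v hv
  | join D₁ D₂ F₁ F₂ x h₁ h₂ hx hV hA hF₁ hF₂ hFx =>
    have hJ : IsJoin D D₁ D₂ x := ⟨hx, hV, hA⟩
    exact .join D₁ D₂ F₁ F₂ x h₁ h₂ hx hV hA
      (fun k v hv hvx => (hFG k (hJ.isSubdigraph_left.1 hv)).symm.trans (hF₁ k v hv hvx))
      (fun k v hv hvx => (hFG k (hJ.isSubdigraph_right.1 hv)).symm.trans (hF₂ k v hv hvx))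
      fun k => (hFG k (hJ.isSubdigraph_left.1 hJ.mem_left)).symm.trans (hFx k)

structure IsJoinFn (x : ℕ) (D₁ D₂ : Digraph') (F F₁ F₂ : Fin s → ℕ → ℕ × ℕ) : Prop where
  eq_left : ∀ k, ∀ v ∈ D₁.verts, v ≠ x → F k v = F₁ k v
  eq_right : ∀ k, ∀ v ∈ D₂.verts, v ≠ x → F k v = F₂ k v
  eq_add : ∀ k, F k x = F₁ k x + F₂ k x

lemma IsJoinFn.symm (h : IsJoinFn x D₁ D₂ F F₁ F₂) : IsJoinFn x D₂ D₁ F F₂ F₁ :=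
  ⟨h.eq_right, h.eq_left, fun k => (h.eq_add k).trans (add_comm _ _)⟩

lemma IsJoin.isHardPair (hJ : IsJoin D D₁ D₂ x) (hF : IsJoinFn x D₁ D₂ F F₁ F₂)
    (h₁ : IsHardPair s D₁ F₁) (h₂ : IsHardPair s D₂ F₂) : IsHardPair s D F :=
  .join D₁ D₂ F₁ F₂ x h₁ h₂ hJ.inter_eq hJ.verts_eq hJ.arcs_eq hF.eq_left hF.eq_right hF.eq_add

lemma IsHardPair.connected (h : IsHardPair s D F) (hne : D.verts.Nonempty) : D.Connected := by
  induction h with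
  | mono _ hbi => exact hbi.2.1
  | bicycle _ _ _ hD => exact hD.2.1.1
  | complete hD =>
    refine ⟨hne, fun u hu v hv => ?_⟩
    rcases eq_or_ne u v with rfl | huv
    exacts [.refl, .single (ugAdj_iff.2 (Or.inl (hD u hu v hv huv)))]
  | join D₁ D₂ _ _ x _ _ hx hV hA _ _ _ ih₁ ih₂ =>
    have hJ : IsJoin _ D₁ D₂ x := ⟨hx, hV, hA⟩
    exact hJ.connected (ih₁ ⟨x, hJ.mem_left⟩) (ih₂ ⟨x, hJ.mem_right⟩)

lemma IsHardPair.eq_zero_of_verts_eq_singleton (h : IsHardPair s D F) (hsing : D.verts = {y})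
    (k : Fin s) : F k y = 0 := by
  induction h generalizing k with
  | mono _ hbi => exact absurd (hsing ▸ hbi.1) (by simp)
  | @bicycle C _ _ _ _ hC =>
    have h2 := hC.2.1.2 y (hsing ▸ Finset.mem_singleton_self y)
    have hsub := ugNbrs_subset_erase (D := C) (v := y)
    rw [hsing, Finset.erase_singleton, Finset.subset_empty] at hsub
    simp [hsub] at h2
  | complete _ _ hsym hsum =>
    have hy : y ∈ _ := hsing ▸ Finset.mem_singleton_self y
    have hs := hsum y hy
    rw [hsing, Finset.card_singleton, Nat.sub_self] at hs
    have h2 := Finset.sum_eq_zero_iff.1 hs k (Finset.mem_univ k)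
    exact Prod.ext ((hsym k y hy).trans h2) h2
  | join D₁ D₂ _ _ x _ _ hx hV hA _ _ hFx ih₁ ih₂ =>
    have hJ : IsJoin _ D₁ D₂ x := ⟨hx, hV, hA⟩
    have hxy : x = y := Finset.mem_singleton.1 (hsing ▸ hJ.isSubdigraph_left.1 hJ.mem_left)
    subst hxy
    have hside : ∀ {P : Digraph'}, P.verts ⊆ _ → x ∈ P.verts → P.verts = {x} := fun hP hx =>
      Finset.Subset.antisymm (hsing ▸ hP) (Finset.singleton_subset_iff.2 hx)
    rw [hFx k, ih₁ (hside hJ.isSubdigraph_left.1 hJ.mem_left) k,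
      ih₂ (hside hJ.isSubdigraph_right.1 hJ.mem_right) k]
    rfl

lemma isHardPair_zero_of_verts_eq_singleton (h : D.verts = {y}) : IsHardPair s D 0 :=
  .complete (fun u hu v hv huv => by
      rw [h, Finset.mem_singleton] at hu hv
      exact absurd (hu.trans hv.symm) huv)
    (fun _ _ _ _ _ => rfl) (fun _ _ _ => rfl) fun v _ => by simp [h]

def HardSplit (s : ℕ) (F : Fin s → ℕ → ℕ × ℕ) (D₁ D₂ : Digraph') (x : ℕ) : Prop :=
  ∃ F₁ F₂, IsHardPair s D₁ F₁ ∧ IsHardPair s D₂ F₂ ∧ IsJoinFn x D₁ D₂ F F₁ F₂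

lemma HardSplit.symm (h : HardSplit s F D₁ D₂ x) : HardSplit s F D₂ D₁ x :=
  let ⟨F₁, F₂, h₁, h₂, hF⟩ := h
  ⟨F₂, F₁, h₂, h₁, hF.symm⟩

def updateAt (F : Fin s → ℕ → ℕ × ℕ) (x : ℕ) (γ : Fin s → ℕ × ℕ) : Fin s → ℕ → ℕ × ℕ :=
  fun k => Function.update (F k) x (γ k)

@[simp] lemma updateAt_self : updateAt F x γ k x = γ k := Function.update_self ..

@[simp] lemma updateAt_of_ne (h : v ≠ x) : updateAt F x γ k v = F k v :=
  Function.update_of_ne h ..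

lemma IsHardPair.hardSplit_of_left_singleton (h : IsHardPair s D F) (hJ : IsJoin D D₁ D₂ x)
    (h₁ : D₁.verts = {x}) : HardSplit s F D₁ D₂ x := by
  obtain rfl := hJ.eq_right_of_left_singleton h₁
  refine ⟨0, F, isHardPair_zero_of_verts_eq_singleton h₁, h,
    ⟨fun k v hv hvx => ?_, fun _ _ _ _ => rfl, fun k => (zero_add _).symm⟩⟩
  rw [h₁, Finset.mem_singleton] at hv
  exact absurd hv hvx

lemma IsHardPair.hardSplit_of_singleton (h : IsHardPair s D F) (hJ : IsJoin D D₁ D₂ x)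
    (h₁₂ : D₁.verts = {x} ∨ D₂.verts = {x}) : HardSplit s F D₁ D₂ x :=
  h₁₂.elim (h.hardSplit_of_left_singleton hJ) fun h₂ =>
    (h.hardSplit_of_left_singleton hJ.symm h₂).symm

lemma IsJoin.isHardPair_updateAt_of_inter (hE : IsJoin D E₁ E₂ x)
    (hF : IsJoinFn x E₁ E₂ F H₁ H₂) (hP : P.IsSubdigraph D) (hx : x ∈ P.verts)
    (h₁ : IsHardPair s (inter E₁ P) G₁) (h₂ : IsHardPair s (inter E₂ P) G₂)
    (hG₁ : ∀ k, ∀ v ∈ (inter E₁ P).verts, v ≠ x → H₁ k v = G₁ k v)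
    (hG₂ : ∀ k, ∀ v ∈ (inter E₂ P).verts, v ≠ x → H₂ k v = G₂ k v) :
    IsHardPair s P (updateAt F x fun k => G₁ k x + G₂ k x) := by
  have hJ : IsJoin P (inter E₁ P) (inter E₂ P) x := by
    simpa only [inter_comm (A := P)] using hE.restrict hP hx
  refine hJ.isHardPair ⟨fun k v hv hvx => ?_, fun k v hv hvx => ?_, fun k => updateAt_self⟩ h₁ h₂
  · rw [updateAt_of_ne hvx, hF.eq_left k v (Finset.mem_inter.1 hv).1 hvx, hG₁ k v hv hvx]
  · rw [updateAt_of_ne hvx, hF.eq_right k v (Finset.mem_inter.1 hv).1 hvx, hG₂ k v hv hvx]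

/-- Split both halves of the join at `x` and regroup the four pieces. -/
lemma IsJoin.hardSplit_of_eq (hE : IsJoin D E₁ E₂ x) (hF : IsJoinFn x E₁ E₂ F H₁ H₂)
    (hJ : IsJoin D D₁ D₂ x) (ih₁ : ∀ P Q, IsJoin E₁ P Q x → HardSplit s H₁ P Q x)
    (ih₂ : ∀ P Q, IsJoin E₂ P Q x → HardSplit s H₂ P Q x) : HardSplit s F D₁ D₂ x := by
  obtain ⟨G₁₁, G₁₂, h₁₁, h₁₂, hG₁⟩ := ih₁ _ _ (hJ.restrict hE.isSubdigraph_left hE.mem_left)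
  obtain ⟨G₂₁, G₂₂, h₂₁, h₂₂, hG₂⟩ := ih₂ _ _ (hJ.restrict hE.isSubdigraph_right hE.mem_right)
  refine ⟨_, _,
    hE.isHardPair_updateAt_of_inter hF hJ.isSubdigraph_left hJ.mem_left h₁₁ h₂₁
      hG₁.eq_left hG₂.eq_left,
    hE.isHardPair_updateAt_of_inter hF hJ.isSubdigraph_right hJ.mem_right h₁₂ h₂₂
      hG₁.eq_right hG₂.eq_right,
    ⟨fun k v _ hvx => (updateAt_of_ne hvx).symm, fun k v _ hvx => (updateAt_of_ne hvx).symm,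
      fun k => ?_⟩⟩
  rw [updateAt_self, updateAt_self, hF.eq_add, hG₁.eq_add, hG₂.eq_add, add_add_add_comm]

/-- The half `E₂` of the join at `y` lies entirely on the side `D₁` of `y`, so only `E₁` has to
be split at `x`. -/
lemma IsJoin.hardSplit_of_ne (hE : IsJoin D E₁ E₂ y) (hF : IsJoinFn y E₁ E₂ F H₁ H₂)
    (h₂ : IsHardPair s E₂ H₂) (hJ : IsJoin D D₁ D₂ x) (hyx : y ≠ x) (hy : y ∈ D₁.verts)
    (hx : x ∈ E₁.verts) (ih₁ : ∀ P Q, IsJoin E₁ P Q x → HardSplit s H₁ P Q x) :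
    HardSplit s F D₁ D₂ x := by
  have hxE₂ : x ∉ E₂.verts := fun h => hyx (hE.eq_of_mem hx h).symm
  have hE₂ : E₂.IsSubdigraph D₁ := hJ.isSubdigraph_left_of_connected hE.isSubdigraph_right
    (h₂.connected ⟨y, hE.mem_right⟩) hxE₂ hE.mem_right hy
  have hD₂ : D₂.IsSubdigraph E₁ := hE.isSubdigraph_of_isSubdigraph hJ hE₂ hx
  have hyD₂ : y ∉ D₂.verts := fun h => hyx (hJ.eq_of_mem hy h)
  obtain ⟨G₁, G₂, hG₁, hG₂, hG⟩ := ih₁ _ _ (hJ.restrict hE.isSubdigraph_left hx)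
  rw [inter_eq_right hD₂] at hG₂ hG
  have hJ₁ : IsJoin D₁ (inter E₁ D₁) E₂ y := by
    have h := hE.restrict hJ.isSubdigraph_left hy
    rwa [inter_comm (A := D₁) (C := E₁), inter_eq_right hE₂] at h
  refine ⟨updateAt F x fun k => G₁ k x, G₂,
    hJ₁.isHardPair ⟨fun k v hv hvy => ?_, fun k v hv hvy => ?_, fun k => ?_⟩ hG₁ h₂, hG₂,
    ⟨fun k v _ hvx => (updateAt_of_ne hvx).symm, fun k v hv hvx => ?_, fun k => ?_⟩⟩
  · rcases eq_or_ne v x with rfl | hvx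
    · exact updateAt_self
    · rw [updateAt_of_ne hvx, hF.eq_left k v (Finset.mem_inter.1 hv).1 hvy, hG.eq_left k v hv hvx]
  · rw [updateAt_of_ne (ne_of_mem_of_not_mem hv hxE₂), hF.eq_right k v hv hvy]
  · rw [updateAt_of_ne hyx, hF.eq_add, hG.eq_left k y (Finset.mem_inter.2 ⟨hE.mem_left, hy⟩) hyx]
  · rw [hF.eq_left k v (hD₂.1 hv) (ne_of_mem_of_not_mem hv hyD₂), hG.eq_right k v hv hvx]
  · rw [updateAt_self, hF.eq_left k x hx (Ne.symm hyx), hG.eq_add]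

lemma IsHardPair.hardSplit (h : IsHardPair s D F) (hJ : IsJoin D D₁ D₂ x) :
    HardSplit s F D₁ D₂ x := by
  induction h generalizing D₁ D₂ x with
  | mono i hbi hi hk =>
    exact (IsHardPair.mono i hbi hi hk).hardSplit_of_singleton hJ
      (hJ.left_or_right_singleton fun _ h₁ h₁x _ h₂ h₂x => hJ.not_biconnected h₁ h₁x h₂ h₂x hbi)
  | bicycle i j hij hD hi hj hk =>
    exact (IsHardPair.bicycle i j hij hD hi hj hk).hardSplit_of_singleton hJ
      (hJ.left_or_right_singleton fun _ h₁ h₁x _ h₂ h₂x => hJ.not_isCycleUG h₁ h₁x h₂ h₂x hD.2.1)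
  | complete hD hconst hsym hsum =>
    exact (IsHardPair.complete hD hconst hsym hsum).hardSplit_of_singleton hJ
      (hJ.left_or_right_singleton fun _ h₁ h₁x _ h₂ h₂x =>
        hJ.not_bidirectedComplete h₁ h₁x h₂ h₂x hD)
  | join E₁ E₂ H₁ H₂ y h₁ h₂ hy hV hA hF₁ hF₂ hFy ih₁ ih₂ =>
    have hE : IsJoin _ E₁ E₂ y := ⟨hy, hV, hA⟩
    have hF : IsJoinFn y E₁ E₂ _ H₁ H₂ := ⟨hF₁, hF₂, hFy⟩
    obtain rfl | hyx := eq_or_ne y x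
    · exact hE.hardSplit_of_eq hF hJ (fun _ _ h => ih₁ h) (fun _ _ h => ih₂ h)
    have hyD : y ∈ D₁.verts ∨ y ∈ D₂.verts :=
      Finset.mem_union.1 (hJ.verts_eq ▸ hE.isSubdigraph_left.1 hE.mem_left)
    have hxE : x ∈ E₁.verts ∨ x ∈ E₂.verts :=
      Finset.mem_union.1 (hE.verts_eq ▸ hJ.isSubdigraph_left.1 hJ.mem_left)
    rcases hyD with hyD | hyD <;> rcases hxE with hxE | hxE
    · exact hE.hardSplit_of_ne hF h₂ hJ hyx hyD hxE (fun _ _ h => ih₁ h)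
    · exact hE.symm.hardSplit_of_ne hF.symm h₁ hJ hyx hyD hxE (fun _ _ h => ih₂ h)
    · exact (hE.hardSplit_of_ne hF h₂ hJ.symm hyx hyD hxE (fun _ _ h => ih₁ h)).symm
    · exact (hE.symm.hardSplit_of_ne hF.symm h₁ hJ.symm hyx hyD hxE (fun _ _ h => ih₂ h)).symm

def IsConstOn (D : Digraph') (F : Fin s → ℕ → ℕ × ℕ) : Prop :=
  ∀ k, ∀ u ∈ D.verts, ∀ v ∈ D.verts, F k u = F k v

def IsRegular (D : Digraph') : Prop := ∀ u ∈ D.verts, ∀ v ∈ D.verts, D.deg u = D.deg v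

def monoFn (D : Digraph') (c : Fin s) : Fin s → ℕ → ℕ × ℕ :=
  fun k v => if k = c then D.deg v else 0

lemma isHardPair_monoFn (hD : D.Biconnected) (c : Fin s) : IsHardPair s D (monoFn D c) :=
  .mono c hD (fun _ _ => if_pos rfl) fun _ hk _ _ => if_neg hk

lemma IsConstOn.congr (hF : IsConstOn D F) (hFG : ∀ k, Set.EqOn (F k) (G k) D.verts) :
    IsConstOn D G :=
  fun k u hu v hv => (hFG k hu).symm.trans ((hF k u hu v hv).trans (hFG k hv))

lemma IsJoin.eqOn_of_left_singleton (hJ : IsJoin D D₁ D₂ x) (hF : IsJoinFn x D₁ D₂ F F₁ F₂)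
    (h₁ : IsHardPair s D₁ F₁) (hs : D₁.verts = {x}) :
    D = D₂ ∧ ∀ k, Set.EqOn (F k) (F₂ k) D₂.verts := by
  refine ⟨hJ.eq_right_of_left_singleton hs, fun k v hv => ?_⟩
  rcases eq_or_ne v x with rfl | hvx
  · rw [hF.eq_add, h₁.eq_zero_of_verts_eq_singleton hs, zero_add]
  · exact hF.eq_right k v hv hvx

/-- A join on a biconnected digraph has a trivial side, so only the three atomic shapes occur. -/
lemma IsHardPair.monoFn_or_isConstOn (h : IsHardPair s D F) (hD : D.Biconnected) :
    (∃ i, ∀ k, Set.EqOn (F k) (monoFn D i k) D.verts) ∨ (IsConstOn D F ∧ D.IsRegular) := by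
  induction h with
  | mono i _ hi hk =>
    refine Or.inl ⟨i, fun k v hv => ?_⟩
    by_cases hki : k = i
    · subst hki
      simp [monoFn, hi v hv, deg]
    · simp [monoFn, hki, hk k hki v hv]
  | bicycle i j _ hC hi hj hk =>
    refine Or.inr ⟨fun k u hu v hv => ?_, fun u hu v hv => by rw [hC.deg_eq hu, hC.deg_eq hv]⟩
    by_cases hki : k = i
    · rw [hki, hi u hu, hi v hv]
    by_cases hkj : k = j
    · rw [hkj, hj u hu, hj v hv]
    rw [hk k hki hkj u hu, hk k hki hkj v hv]
  | complete hC hconst =>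
    exact Or.inr ⟨hconst, fun u hu v hv => by rw [hC.deg_eq hu, hC.deg_eq hv]⟩
  | join E₁ E₂ H₁ H₂ z h₁ h₂ hz hV hA hF₁ hF₂ hFz ih₁ ih₂ =>
    have hE : IsJoin _ E₁ E₂ z := ⟨hz, hV, hA⟩
    have hF : IsJoinFn z E₁ E₂ _ H₁ H₂ := ⟨hF₁, hF₂, hFz⟩
    rcases hE.left_or_right_singleton
      (fun _ h₁ h₁z _ h₂ h₂z => hE.not_biconnected h₁ h₁z h₂ h₂z hD) with hs | hs
    · obtain ⟨rfl, hagree⟩ := hE.eqOn_of_left_singleton hF h₁ hs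
      exact (ih₂ hD).imp (fun ⟨i, hi⟩ => ⟨i, fun k => (hagree k).trans (hi k)⟩)
        fun ⟨hc, hr⟩ => ⟨hc.congr fun k => (hagree k).symm, hr⟩
    · obtain ⟨rfl, hagree⟩ := hE.symm.eqOn_of_left_singleton hF.symm h₂ hs
      exact (ih₁ hD).imp (fun ⟨i, hi⟩ => ⟨i, fun k => (hagree k).trans (hi k)⟩)
        fun ⟨hc, hr⟩ => ⟨hc.congr fun k => (hagree k).symm, hr⟩

/-! ### Blocks and ears -/

/-- After deleting a vertex, every vertex of the ear still reaches `a` or `b` along the ear. -/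
lemma Biconnected.induce_union_ear (hH : H.Biconnected) (hHD : H.IsSubdigraph D) {a b : ℕ}
    {L : List ℕ} (ha : a ∈ H.verts) (hb : b ∈ H.verts) (hab : a ≠ b)
    (hchain : (a :: L ++ [b]).IsChain D.ugAdj) (hnd : L.Nodup) (hL : ∀ p ∈ L, p ∉ H.verts) :
    (D.induce (H.verts ∪ L.toFinset)).Biconnected := by
  set X := H.verts ∪ L.toFinset
  have hHX : H.verts ⊆ X := Finset.subset_union_left
  have hPX : ∀ p ∈ a :: L ++ [b], p ∈ X := by
    intro p hp
    rw [List.mem_append, List.mem_singleton, List.mem_cons] at hp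
    rcases hp with (rfl | hp) | rfl
    exacts [hHX ha, Finset.mem_union_right _ (List.mem_toFinset.2 hp), hHX hb]
  have key : ∀ y, ((D.induce X).del {y}).Connected := by
    intro y
    rw [del_induce]
    have hHy : ∀ p ∈ H.verts, p ≠ y → ∀ q ∈ H.verts, q ≠ y →
        ReflTransGen (D.induce (X \ {y})).ugAdj p q := fun p hp hpy q hq hqy =>
      (del_induce ▸ (hHD.isSubdigraph_induce hHX).del {y}).reflTransGen
        ((hH.del_connected y).2 p (by simp [hp, hpy]) q (by simp [hq, hqy]))
    have hLy : ∀ p ∈ L, p ≠ y → ∃ q ∈ H.verts, q ≠ y ∧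
        ReflTransGen (D.induce (X \ {y})).ugAdj p q := by
      intro p hp hpy
      obtain ⟨M, hM, hyM, hpM, hends⟩ := List.exists_infix_mem_of_nodup hnd
        (fun h => hL a h ha) (fun h => hL b h hb) hab hp hpy
      have hseg : ∀ q ∈ M, ReflTransGen (D.induce (X \ {y})).ugAdj p q := fun q hq =>
        reflTransGen_induce_of_isChain (hchain.infix hM) (fun e he => Finset.mem_sdiff.2
          ⟨hPX e (hM.subset he), fun h => hyM (Finset.mem_singleton.1 h ▸ he)⟩) hpM hq
      rcases hends with haM | hbM
      exacts [⟨a, ha, ne_of_mem_of_not_mem haM hyM, hseg a haM⟩,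
        ⟨b, hb, ne_of_mem_of_not_mem hbM hyM, hseg b hbM⟩]
    obtain ⟨q₀, hq₀, hq₀y⟩ := Finset.exists_mem_ne hH.1 y
    refine connected_of_forall_reflTransGen (x := q₀) (by simp [hHD.1 hq₀, hHX hq₀, hq₀y])
      fun p hp => ?_
    simp only [induce_verts, Finset.mem_inter, Finset.mem_sdiff, Finset.mem_singleton] at hp
    obtain ⟨-, hpX, hpy⟩ := hp
    rcases Finset.mem_union.1 hpX with hpH | hpL
    · exact hHy p hpH hpy q₀ hq₀ hq₀y
    · obtain ⟨q, hq, hqy, hpq⟩ := hLy p (List.mem_toFinset.1 hpL) hpy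
      exact hpq.trans (hHy q hq hqy q₀ hq₀ hq₀y)
  refine ⟨hH.1.trans (Finset.card_le_card (Finset.subset_inter hHD.1 hHX)), ?_, fun y _ => key y⟩
  obtain ⟨y, hy⟩ := Infinite.exists_notMem_finset (D.induce X).verts
  simpa [del_eq_self hy] using key y

lemma IsBlock.induce_verts_eq (hB : IsBlock B D) : D.induce B.verts = B :=
  hB.2.2 _ induce_isSubdigraph
    (hB.2.1.mono (hB.1.isSubdigraph_induce subset_rfl) Finset.inter_subset_right)
    (hB.1.isSubdigraph_induce subset_rfl)

/-- Otherwise a walk from `w` back to the block avoiding `v` yields an ear enlarging the block. -/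
lemma IsBlock.mem_verts_of_ugAdj (hB : IsBlock B D) (hv : v ∈ B.verts)
    (hdel : (D.del {v}).Connected) (hvw : D.ugAdj v w) : w ∈ B.verts := by
  by_contra hw
  have hwv : w ≠ v := fun h => hw (h ▸ hv)
  obtain ⟨b, hb, hbv⟩ := Finset.exists_mem_ne hB.2.1.1 v
  obtain ⟨L, z, hz, hchain, hnd, hout⟩ := exists_ear (S := (B.verts : Set ℕ))
    (hdel.2 w (by simp [hvw.2.1, hwv]) b (by simp [hB.1.1 hb, hbv])) hb hw
  have hzv : z ≠ v := by
    have hmem : ∀ p ∈ w :: L ++ [z], p ∈ (D.del {v}).verts :=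
      hchain.induction _ _ (fun _ _ h _ => h.2.1) fun _ => by simp [hvw.2.1, hwv]
    have hz' := hmem z (by simp)
    rw [del_verts, Finset.mem_sdiff, Finset.mem_singleton] at hz'
    exact hz'.2
  have hbic := hB.2.1.induce_union_ear (L := w :: L) hB.1 hv hz hzv.symm
    ((hchain.imp fun _ _ => del_isSubdigraph.ugAdj).cons_cons hvw) hnd hout
  have heq := hB.2.2 _ induce_isSubdigraph hbic (hB.1.isSubdigraph_induce Finset.subset_union_left)
  exact hw (heq ▸ by simp [hvw.2.1])

lemma IsEndBlockAt.del_connected (hend : IsEndBlockAt B D x) (hv : v ∈ B.verts) (hvx : v ≠ x) :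
    (D.del {v}).Connected := by
  by_contra h
  exact hvx (hend.2.2.2 v hv ⟨hend.1.1.1 hv, ⟨x, by simp [hend.2.2.1.1, Ne.symm hvx]⟩, h⟩)

lemma IsEndBlockAt.mem_arcs (hend : IsEndBlockAt B D x) (ha : a ∈ D.arcs)
    (hp : p = a.1 ∨ p = a.2) (hpB : p ∈ B.verts) (hpx : p ≠ x) : a ∈ B.arcs := by
  have hadj : D.ugAdj a.1 a.2 := ugAdj_iff.2 (Or.inl ha)
  have hmem : ∀ {q}, D.ugAdj p q → q ∈ B.verts :=
    hend.1.mem_verts_of_ugAdj hpB (hend.del_connected hpB hpx)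
  have h12 : a.1 ∈ B.verts ∧ a.2 ∈ B.verts := by
    rcases hp with rfl | rfl
    exacts [⟨hpB, hmem hadj⟩, ⟨hmem (ugAdj_comm.1 hadj), hpB⟩]
  rw [← hend.1.induce_verts_eq]
  exact mem_induce_arcs.2 ⟨ha, h12⟩

lemma IsEndBlockAt.isJoin (hend : IsEndBlockAt B D x) : IsJoin D B (D.del (B.verts \ {x})) x where
  inter_eq := by
    ext p
    simp only [Finset.mem_inter, del_verts, Finset.mem_sdiff, Finset.mem_singleton]
    constructor
    · rintro ⟨hp, -, h⟩
      by_contra hpx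
      exact h ⟨hp, hpx⟩
    · rintro rfl
      exact ⟨hend.2.1, hend.1.1.1 hend.2.1, fun h => h.2 rfl⟩
  verts_eq := by
    ext p
    simp only [Finset.mem_union, del_verts, Finset.mem_sdiff, Finset.mem_singleton]
    by_cases hp : p ∈ B.verts
    · simp [hp, hend.1.1.1 hp]
    · simp [hp]
  arcs_eq := by
    ext a
    simp only [Finset.mem_union, mem_del_arcs, Finset.mem_sdiff, Finset.mem_singleton]
    constructor
    · intro ha
      by_cases h₁ : a.1 ∈ B.verts ∧ a.1 ≠ x
      · exact Or.inl (hend.mem_arcs ha (Or.inl rfl) h₁.1 h₁.2)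
      by_cases h₂ : a.2 ∈ B.verts ∧ a.2 ≠ x
      · exact Or.inl (hend.mem_arcs ha (Or.inr rfl) h₂.1 h₂.2)
      exact Or.inr ⟨ha, h₁, h₂⟩
    · rintro (ha | ⟨ha, -⟩)
      exacts [hend.1.1.2 ha, ha]

/-! ### The end-block's share of the budget -/

/-- `γ` is the part of the budget at `x` taken by the end-block `B`. -/
structure IsBlockShare (F : Fin s → ℕ → ℕ × ℕ) (B : Digraph') (x : ℕ) (γ : Fin s → ℕ × ℕ) :
    Prop where
  le : ∀ k, γ k ≤ F k x
  isHardPair : IsHardPair s B (updateAt F x γ)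
  unique : ∀ G, IsHardPair s B G → (∀ k, ∀ v ∈ B.verts, v ≠ x → G k v = F k v) →
    (∀ k, G k x ≤ F k x) → ∀ k, G k x = γ k

lemma MonoHardEndBlock.isBlockShare (hmono : MonoHardEndBlock F B x c) (hB : B.Biconnected)
    (hx : x ∈ B.verts) (hu : u ∈ B.verts) (hux : u ≠ x) :
    IsBlockShare F B x fun k => monoFn B c k x := by
  have hF : ∀ k, ∀ v ∈ B.verts, v ≠ x → F k v = monoFn B c k v := fun k v hv hvx => by
    obtain ⟨hc, hk⟩ := hmono.2.2 v hv hvx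
    by_cases hkc : k = c
    · subst hkc
      simp [monoFn, hc, deg]
    · simp [monoFn, hkc, hk k hkc]
  refine ⟨fun k => ?_, (isHardPair_monoFn hB c).congr fun k v hv => ?_, fun G hG hGF _ k => ?_⟩
  · by_cases hkc : k = c
    · subst hkc
      simpa [monoFn, deg] using Prod.mk_le_mk.2 ⟨hmono.1, hmono.2.1⟩
    · simp [monoFn, hkc]
  · rcases eq_or_ne v x with rfl | hvx
    · rw [updateAt_self]
    · rw [updateAt_of_ne hvx, hF k v hv hvx]
  · rcases hG.monoFn_or_isConstOn hB with ⟨i, hi⟩ | ⟨hc, hr⟩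
    · obtain rfl : i = c := by
        by_contra hic
        have h0 := (hi c hu).symm.trans ((hGF c u hu hux).trans (hF c u hu hux))
        simp only [monoFn, if_neg (Ne.symm hic)] at h0
        exact hB.2.1.deg_ne_zero hB.1 hu h0.symm
      exact hi k hx
    · rw [hc k x hx u hu, hGF k u hu hux, hF k u hu hux, monoFn, monoFn, hr u hu x hx]

lemma exists_eq_updateAt (hu : u ∈ B.verts) (hux : u ≠ x) (hv : v ∈ B.verts) :
    ∃ w ∈ B.verts, w ≠ x ∧ ∀ k, updateAt F x (fun k => F k u) k v = F k w := by
  rcases eq_or_ne v x with rfl | hvx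
  exacts [⟨u, hu, hux, fun k => updateAt_self⟩, ⟨v, hv, hvx, fun k => updateAt_of_ne hvx⟩]

lemma BicycleHardEndBlock.le_and_isHardPair (h : BicycleHardEndBlock F B x) (hu : u ∈ B.verts)
    (hux : u ≠ x) : (∀ k, F k u ≤ F k x) ∧ IsHardPair s B (updateAt F x fun k => F k u) := by
  obtain ⟨hC, i, j, hij, hi₁, hi₂, hj₁, hj₂, hF⟩ := h
  refine ⟨fun k => ?_,
    .bicycle i j hij hC (fun v hv => ?_) (fun v hv => ?_) fun k hki hkj v hv => ?_⟩
  · obtain ⟨hFi, hFj, hFk⟩ := hF u hu hux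
    by_cases hki : k = i
    · rw [hki, hFi]
      exact Prod.le_def.2 ⟨hi₁, hi₂⟩
    by_cases hkj : k = j
    · rw [hkj, hFj]
      exact Prod.le_def.2 ⟨hj₁, hj₂⟩
    rw [hFk k hki hkj]
    exact Prod.le_def.2 ⟨Nat.zero_le _, Nat.zero_le _⟩
  all_goals
    obtain ⟨w, hw, hwx, hFw⟩ := exists_eq_updateAt (F := F) hu hux hv
    rw [hFw]
  exacts [(hF w hw hwx).1, (hF w hw hwx).2.1, (hF w hw hwx).2.2 k hki hkj]

lemma CompleteHardEndBlock.le_and_isHardPair (h : CompleteHardEndBlock F B x)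
    (hu : u ∈ B.verts) (hux : u ≠ x)
    (hsum : ∀ v ∈ B.verts, v ≠ x → ∑ k, (F k v).2 = B.outDeg v) :
    (∀ k, F k u ≤ F k x) ∧ IsHardPair s B (updateAt F x fun k => F k u) := by
  obtain ⟨hC, hconst, hsym, hdom⟩ := h
  refine ⟨fun k => Prod.le_def.2 (hdom k u hu hux),
    .complete hC (fun k p hp q hq => ?_) (fun k v hv => ?_) fun v hv => ?_⟩
  · obtain ⟨p', hp', hp'x, hFp⟩ := exists_eq_updateAt (F := F) hu hux hp
    obtain ⟨q', hq', hq'x, hFq⟩ := exists_eq_updateAt (F := F) hu hux hq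
    rw [hFp, hFq]
    exact hconst k p' hp' hp'x q' hq' hq'x
  · obtain ⟨w, hw, hwx, hFw⟩ := exists_eq_updateAt (F := F) hu hux hv
    rw [hFw]
    exact hsym k w hw hwx
  · obtain ⟨w, hw, hwx, hFw⟩ := exists_eq_updateAt (F := F) hu hux hv
    simp only [hFw]
    rw [hsum w hw hwx, hC.outDeg_eq hw]

lemma isBlockShare_of_not_mono (hnm : ¬ ∃ c, MonoHardEndBlock F B x c) (hB : B.Biconnected)
    (hx : x ∈ B.verts) (hu : u ∈ B.verts) (hux : u ≠ x)
    (h : (∀ k, F k u ≤ F k x) ∧ IsHardPair s B (updateAt F x fun k => F k u)) :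
    IsBlockShare F B x fun k => F k u := by
  refine ⟨h.1, h.2, fun G hG hGF hGle k => ?_⟩
  rcases hG.monoFn_or_isConstOn hB with ⟨i, hi⟩ | ⟨hc, -⟩
  · -- a monochromatic `G` would make `B` a monochromatic hard end-block
    have hix : G i x = B.deg x := by simpa [monoFn] using hi i hx
    have hle := Prod.le_def.1 (hix ▸ hGle i)
    refine absurd ⟨i, hle.1, hle.2, fun v hv hvx => ⟨?_, fun k hk => ?_⟩⟩ hnm
    · rw [← hGF i v hv hvx, hi i hv]
      exact if_pos rfl
    · rw [← hGF k v hv hvx, hi k hv]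
      exact if_neg hk
  · rw [hc k x hx u hu, hGF k u hu hux]

lemma IsContraction.exists_isBlockShare {D' : Digraph'} {F' : Fin s → ℕ → ℕ × ℕ}
    (hcontr : D.IsContraction F B x u D' F') (hend : IsEndBlockAt B D x)
    (hhard : HardEndBlock F B x) (htight : D.Tight s F) (hu : u ∈ B.verts) (hux : u ≠ x) :
    ∃ γ, IsBlockShare F B x γ ∧ ∀ k, F' k x = F k x - γ k := by
  rcases hcontr.2.2 with ⟨c, hmono, hc, hk⟩ | ⟨hnm, hF'⟩
  · refine ⟨_, hmono.isBlockShare hend.1.2.1 hend.2.1 hu hux, fun k => ?_⟩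
    by_cases hkc : k = c
    · subst hkc
      rw [hc]
      simp only [monoFn]
      rfl
    · rw [hk k hkc]
      simp [monoFn, hkc]
  · refine ⟨_, isBlockShare_of_not_mono hnm hend.1.2.1 hend.2.1 hu hux ?_, hF'⟩
    rcases hhard with hm | hbi | hcomp
    · exact absurd hm hnm
    · exact hbi.le_and_isHardPair hu hux
    · exact hcomp.le_and_isHardPair hu hux fun v hv hvx => by
        rw [(htight v (hend.1.1.1 hv)).2, hend.isJoin.outDeg_left hv hvx]

end Digraph'

open Digraph'

theorem contraction_hard_iff_general
    (D : Digraph') (s : ℕ) (F : Fin s → ℕ → ℕ × ℕ)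
    (htight : D.Tight s F)
    (B : Digraph') (x : ℕ) (hend : IsEndBlockAt B D x)
    (hhard : HardEndBlock F B x)
    (u : ℕ) (hu : u ∈ B.verts) (hux : u ≠ x)
    (D' : Digraph') (F' : Fin s → ℕ → ℕ × ℕ)
    (hcontr : D.IsContraction F B x u D' F') :
    IsHardPair s D F ↔ IsHardPair s D' F' := by
  obtain ⟨γ, hγ, hF'x⟩ := hcontr.exists_isBlockShare hend hhard htight hu hux
  obtain ⟨rfl, hF', -⟩ := hcontr
  have hJ := hend.isJoin
  constructor
  · intro h
    obtain ⟨G₁, G₂, hG₁, hG₂, hG⟩ := h.hardSplit hJ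
    have hG₁x := hγ.unique G₁ hG₁ (fun k v hv hvx => (hG.eq_left k v hv hvx).symm)
      fun k => hG.eq_add k ▸ le_self_add
    refine hG₂.congr fun k v hv => ?_
    rcases eq_or_ne v x with rfl | hvx
    · rw [hF'x, hG.eq_add, hG₁x, add_tsub_cancel_left]
    · rw [← hG.eq_right k v hv hvx, hF' k v hv hvx]
  · intro h
    refine hJ.isHardPair ⟨fun k v _ hvx => (updateAt_of_ne hvx).symm,
      fun k v hv hvx => (hF' k v hv hvx).symm, fun k => ?_⟩ hγ.isHardPair h
    rw [updateAt_self, hF'x, add_tsub_cancel_of_le (hγ.le k)]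

/-- **Lemma (contraction preserves hardness).** Let `(D,F)` be a tight valid pair with `D` not
biconnected, `B` a hard end-block of `D` with cut-vertex `x`, and `(D',F')` the contraction of
`(D,F)` with respect to `B`. Then `(D,F)` is a hard pair iff `(D',F')` is a hard pair. -/
theorem contraction_hard_iff
    (D : Digraph') (s : ℕ) (F : Fin s → ℕ → ℕ × ℕ)
    (hvalid : D.ValidPair s F) (htight : D.Tight s F)
    (hnotbi : ¬ D.Biconnected)
    (B : Digraph') (x : ℕ) (hend : IsEndBlockAt B D x)
    (hhard : HardEndBlock F B x)
    (u : ℕ) (hu : u ∈ B.verts) (hux : u ≠ x)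
    (D' : Digraph') (F' : Fin s → ℕ → ℕ × ℕ)
    (hcontr : D.IsContraction F B x u D' F') :
    IsHardPair s D F ↔ IsHardPair s D' F' :=
  contraction_hard_iff_general D s F htight B x hend hhard u hu hux D' F' hcontr
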